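/- arXiv:2105.06256 — 4 statements merged into one kernel-verified Lean document; each statement's English description precedes it below -/
import Mathlib

section
/- For all real constants δ > 0, η > 0, β > 0, the function G(τ) = φ(τ)/τ is monotone nondecreasing on the interval [1, ∞) of real numbers. (This is the mathematical content of Proposition 1: with no unreliable clients, the convergence upper bound of federated learning worsens as the number of local epochs τ increases.) -/
/-- `t ↦ a ^ t` (real power) is convex for `a > 0`. -/
lemma convexOn_rpow_const {a : ℝ} (ha : 0 < a) :
    ConvexOn ℝ Set.univ (fun t : ℝ => a ^ t) := by
  have h : (fun t : ℝ => a ^ t) = fun t => Real.exp (Real.log a * t) := by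
    funext t
    rw [Real.rpow_def_of_pos ha]
  rw [h]
  refine ⟨convex_univ, fun x _ y _ p q hp hq hpq => ?_⟩
  have := convexOn_exp.2 (Set.mem_univ (Real.log a * x)) (Set.mem_univ (Real.log a * y))
    hp hq hpq
  simp only [smul_eq_mul] at this ⊢
  calc Real.exp (Real.log a * (p * x + q * y))
      = Real.exp (p * (Real.log a * x) + q * (Real.log a * y)) := by ring_nf
    _ ≤ p * Real.exp (Real.log a * x) + q * Real.exp (Real.log a * y) := this

/-- Proposition 1 (no unreliable clients): for δ, η, β > 0, the function
`G(τ) = φ(τ)/τ`, with `φ(τ) = (δ/β)·((ηβ+1)^τ − 1) − η·δ·τ` (real power),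
is monotone nondecreasing on `[1, ∞)`. -/
theorem prop1_phi_div_tau_monotone (δ η β : ℝ) (hδ : 0 < δ) (hη : 0 < η) (hβ : 0 < β) :
    MonotoneOn (fun τ : ℝ => ((δ / β) * ((η * β + 1) ^ τ - 1) - η * δ * τ) / τ)
      (Set.Ici (1 : ℝ)) := by
  have ha : (0 : ℝ) < η * β + 1 := by positivity
  have hconv := convexOn_rpow_const ha
  intro x hx y hy hxy
  have hx1 : (1 : ℝ) ≤ x := hx
  have hy1 : (1 : ℝ) ≤ y := hy
  have hx0 : (0 : ℝ) < x := lt_of_lt_of_le one_pos hx1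
  have hy0 : (0 : ℝ) < y := lt_of_lt_of_le one_pos hy1
  have hsec := hconv.secant_mono (Set.mem_univ 0) (Set.mem_univ x) (Set.mem_univ y)
    (ne_of_gt hx0) (ne_of_gt hy0) hxy
  simp only [Real.rpow_zero, sub_zero] at hsec
  -- hsec : ((η*β+1)^x - 1) / x ≤ ((η*β+1)^y - 1) / y
  have hdb : (0 : ℝ) ≤ δ / β := le_of_lt (by positivity)
  have key : (δ / β) * (((η * β + 1) ^ x - 1) / x) ≤
      (δ / β) * (((η * β + 1) ^ y - 1) / y) :=
    mul_le_mul_of_nonneg_left hsec hdb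
  have hrw : ∀ t : ℝ, 0 < t →
      ((δ / β) * ((η * β + 1) ^ t - 1) - η * δ * t) / t
        = (δ / β) * (((η * β + 1) ^ t - 1) / t) - η * δ := by
    intro t ht
    field_simp
  simp only [hrw x hx0, hrw y hy0]
  linarith
end

section
/- Let δ > 0, η > 0, β > 0, ρ > 0, ε > 0, T > 0 and A > 0 be real constants. Then the function B(τ) = 1 / ( T·( A − ρ·φ(τ) / (τ·ε²) ) ) is monotone nondecreasing on the set S = { τ ∈ [1,∞) : A − ρ·φ(τ)/(τ·ε²) > 0 }. (Proposition 1 in bound form: with no unreliable clients, i.e. p_U = 0, the convergence upper bound 1/(T(ωη(1−βη/2) − ρφ(τ)/(τε²))) increases with the number of local epochs τ, taking A = ωη(1−βη/2).) -/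
lemma convexOn_const_rpow {c : ℝ} (hc : 0 < c) :
    ConvexOn ℝ Set.univ (fun t : ℝ => c ^ t) := by
  have h : (fun t : ℝ => c ^ t) = fun t : ℝ => Real.exp (Real.log c * t) := by
    funext t; rw [Real.rpow_def_of_pos hc]
  rw [h]
  refine ⟨convex_univ, fun x _ y _ a b ha hb hab => ?_⟩
  have := convexOn_exp.2 (Set.mem_univ (Real.log c * x)) (Set.mem_univ (Real.log c * y))
    ha hb hab
  simp only [smul_eq_mul] at this ⊢
  rw [show Real.log c * (a * x + b * y)
      = a * (Real.log c * x) + b * (Real.log c * y) from by ring]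
  exact this

/-- Proposition 1 (bound form): with no unreliable clients the convergence upper bound
`B(τ) = 1 / (T·(A − ρ·φ(τ)/(τ·ε²)))` is monotone nondecreasing on
`S = {τ ∈ [1,∞) : A − ρ·φ(τ)/(τ·ε²) > 0}`, where
`φ(τ) = (δ/β)·((ηβ+1)^τ − 1) − η·δ·τ`. -/
theorem prop1_bound_monotone (δ η β ρ ε T A : ℝ)
    (hδ : 0 < δ) (hη : 0 < η) (hβ : 0 < β) (hρ : 0 < ρ) (hε : 0 < ε)
    (hT : 0 < T) (hA : 0 < A) :
    MonotoneOn
      (fun τ : ℝ =>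
        1 / (T * (A - ρ * ((δ / β) * ((η * β + 1) ^ τ - 1) - η * δ * τ) / (τ * ε ^ 2))))
      {τ : ℝ | τ ∈ Set.Ici (1 : ℝ) ∧
        0 < A - ρ * ((δ / β) * ((η * β + 1) ^ τ - 1) - η * δ * τ) / (τ * ε ^ 2)} := by
  intro x hx y hy hxy
  obtain ⟨hx1, hxD⟩ := hx
  obtain ⟨hy1, hyD⟩ := hy
  simp only [Set.mem_Ici] at hx1 hy1
  have hx0 : 0 < x := lt_of_lt_of_le one_pos hx1
  have hy0 : 0 < y := lt_of_lt_of_le one_pos hy1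
  set c : ℝ := η * β + 1 with hc
  have hcpos : 0 < c := by positivity
  -- secant slope monotonicity for c^τ through 0
  have hsec : (c ^ x - 1) / x ≤ (c ^ y - 1) / y := by
    have := (convexOn_const_rpow hcpos).secant_mono (a := 0) (x := x) (y := y)
      (Set.mem_univ _) (Set.mem_univ _) (Set.mem_univ _) (ne_of_gt hx0) (ne_of_gt hy0) hxy
    simpa [Real.rpow_zero] using this
  -- hence φ(x)/x ≤ φ(y)/y scaled
  have key : ρ * ((δ / β) * (c ^ x - 1) - η * δ * x) / (x * ε ^ 2)
      ≤ ρ * ((δ / β) * (c ^ y - 1) - η * δ * y) / (y * ε ^ 2) := by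
    have hrw : ∀ τ : ℝ, 0 < τ →
        ρ * ((δ / β) * (c ^ τ - 1) - η * δ * τ) / (τ * ε ^ 2)
        = (ρ * δ / (β * ε ^ 2)) * ((c ^ τ - 1) / τ) - ρ * η * δ / ε ^ 2 := by
      intro τ hτ
      field_simp
    rw [hrw x hx0, hrw y hy0]
    have hcoef : 0 ≤ ρ * δ / (β * ε ^ 2) := by positivity
    have := mul_le_mul_of_nonneg_left hsec hcoef
    linarith
  have hDyx : A - ρ * ((δ / β) * (c ^ y - 1) - η * δ * y) / (y * ε ^ 2)
      ≤ A - ρ * ((δ / β) * (c ^ x - 1) - η * δ * x) / (x * ε ^ 2) := by linarith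
  have h1 : 0 < T * (A - ρ * ((δ / β) * (c ^ y - 1) - η * δ * y) / (y * ε ^ 2)) :=
    mul_pos hT hyD
  have h2 : T * (A - ρ * ((δ / β) * (c ^ y - 1) - η * δ * y) / (y * ε ^ 2))
      ≤ T * (A - ρ * ((δ / β) * (c ^ x - 1) - η * δ * x) / (x * ε ^ 2)) :=
    mul_le_mul_of_nonneg_left hDyx hT.le
  exact one_div_le_one_div_of_le h1 h2
end

section
/- Let δ > 0, η > 0, β > 0 and ∇ ≥ 0 be real constants. Then the function H(τ) = (φ(τ) + ∇)/τ is convex on the interval [1, ∞) of real numbers. (Proposition 3: under unreliable behavior of clients with a fixed total number of iterations T, the variable part of the convergence upper bound is a convex function of the number of local epochs τ, treating τ as a continuous variable.) -/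
/-!
Writing `(ηβ+1)^τ = exp (L τ)` with `L = log (ηβ+1) > 0`, the linear term of `φ` contributes only
the constant `-ηδ` to `H`, so `H = (δ/β) · (exp (L τ) - 1)/τ + ∇ · τ⁻¹ - ηδ` for `τ > 0`.
Both `τ⁻¹` and `(exp (L τ) - 1)/τ` are convex on `(0, ∞)`; for the latter, with `s = L τ`,
the second derivative is `(exp s · (s² - 2s + 2) - 2)/τ³`, and the numerator is nonnegative
because `(1 + s + s²/2)(s² - 2s + 2) = 2 + s⁴/2`.
-/

open Real Set

lemma two_le_exp_mul_sq_sub_two_mul_add_two {s : ℝ} (hs : 0 ≤ s) :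
    2 ≤ exp s * (s ^ 2 - 2 * s + 2) := by
  have hq : 0 ≤ s ^ 2 - 2 * s + 2 := by nlinarith [sq_nonneg (s - 1)]
  calc 2 ≤ (1 + s + s ^ 2 / 2) * (s ^ 2 - 2 * s + 2) := by nlinarith [pow_two_nonneg (s ^ 2)]
    _ ≤ exp s * (s ^ 2 - 2 * s + 2) := by gcongr; exact quadratic_le_exp_of_nonneg hs

lemma hasDerivAt_exp_mul_sub_one_div (L : ℝ) {x : ℝ} (hx : x ≠ 0) :
    HasDerivAt (fun x => (exp (L * x) - 1) / x)
      ((L * x * exp (L * x) - exp (L * x) + 1) / x ^ 2) x := by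
  have hexp : HasDerivAt (fun x => exp (L * x)) (exp (L * x) * L) x := by
    simpa using ((hasDerivAt_id x).const_mul L).exp
  refine ((hexp.sub_const 1).div (hasDerivAt_id' x) hx).congr_deriv ?_
  field_simp
  ring

lemma hasDerivAt_exp_mul_sub_one_div_deriv (L : ℝ) {x : ℝ} (hx : x ≠ 0) :
    HasDerivAt (fun x => (L * x * exp (L * x) - exp (L * x) + 1) / x ^ 2)
      ((exp (L * x) * ((L * x) ^ 2 - 2 * (L * x) + 2) - 2) / x ^ 3) x := by
  have hexp : HasDerivAt (fun x => exp (L * x)) (exp (L * x) * L) x := by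
    simpa using ((hasDerivAt_id x).const_mul L).exp
  have hnum := ((((hasDerivAt_id' x).const_mul L).fun_mul hexp).fun_sub hexp).add_const 1
  refine (hnum.div (hasDerivAt_pow 2 x) (pow_ne_zero 2 hx)).congr_deriv ?_
  field_simp
  ring

lemma convexOn_exp_mul_sub_one_div {L : ℝ} (hL : 0 ≤ L) :
    ConvexOn ℝ (Ioi 0) fun x => (exp (L * x) - 1) / x := by
  refine convexOn_of_hasDerivWithinAt2_nonneg (convex_Ioi 0) ?_ ?_ ?_ ?_
    (f' := fun x => (L * x * exp (L * x) - exp (L * x) + 1) / x ^ 2)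
    (f'' := fun x => (exp (L * x) * ((L * x) ^ 2 - 2 * (L * x) + 2) - 2) / x ^ 3)
  · exact fun x hx =>
      (hasDerivAt_exp_mul_sub_one_div L (ne_of_gt hx)).continuousAt.continuousWithinAt
  all_goals rw [interior_Ioi]; intro x (hx : 0 < x)
  · exact (hasDerivAt_exp_mul_sub_one_div L hx.ne').hasDerivWithinAt
  · exact (hasDerivAt_exp_mul_sub_one_div_deriv L hx.ne').hasDerivWithinAt
  · have := two_le_exp_mul_sq_sub_two_mul_add_two (mul_nonneg hL hx.le)
    exact div_nonneg (by linarith) (by positivity)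

/-- Proposition 3: for δ, η, β > 0 and ∇ ≥ 0, the function
`H(τ) = (φ(τ) + ∇)/τ`, with `φ(τ) = (δ/β)·((ηβ+1)^τ − 1) − η·δ·τ`,
is convex on `[1, ∞)`. -/
theorem prop3_H_convexOn (δ η β nabla : ℝ)
    (hδ : 0 < δ) (hη : 0 < η) (hβ : 0 < β) (hnabla : 0 ≤ nabla) :
    ConvexOn ℝ (Set.Ici (1 : ℝ))
      (fun τ : ℝ => (((δ / β) * ((η * β + 1) ^ τ - 1) - η * δ * τ) + nabla) / τ) := by
  have hbase : 1 < η * β + 1 := by nlinarith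
  have hconvex : ConvexOn ℝ (Ioi 0) fun τ : ℝ =>
      (δ / β) • ((exp (log (η * β + 1) * τ) - 1) / τ) + nabla • τ ^ (-1 : ℤ) + -(η * δ) :=
    (((convexOn_exp_mul_sub_one_div (log_pos hbase).le).smul (div_pos hδ hβ).le).add
      ((convexOn_zpow (-1)).smul hnabla)).add_const _
  refine (hconvex.subset (Ici_subset_Ioi.mpr one_pos) (convex_Ici 1)).congr fun τ hτ => ?_
  have hτ0 : τ ≠ 0 := (zero_lt_one.trans_le hτ).ne'
  simp only [smul_eq_mul, rpow_def_of_pos (zero_lt_one.trans hbase), zpow_neg_one]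
  field_simp
  ring
end

section
/- Let δ > 0, η > 0, β > 0 and ∇ ≥ 0 be real constants. Then for every real τ > 0, the second derivative of H at τ equals H''(τ) = (δ/(β·τ³))·( (ηβ+1)^τ·( (τ·ln(ηβ+1) − 1)² + 1 ) − 2 ) + 2∇/τ³, and moreover H''(τ) ≥ 0 for every τ ≥ 1. -/
/-!
Write `a = ηβ + 1` and `L = ln a`. The second derivative of `φ(τ)/τ` is
`(τ²φ'' − 2τφ' + 2φ)/τ³`; for `φ = (δ/β)(a^τ − 1) − ηδτ + ∇` the linear term `−ηδτ` cancels out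
of the numerator, which becomes `(δ/β)(a^τ(L²τ² − 2Lτ + 2) − 2) + 2∇`. For the sign, put
`x = τL ≥ 0`, so `a^τ = eˣ`: from `eˣ ≥ 1 + x + x²/2` one gets `eˣ((x − 1)² + 1) ≥ 2 + x⁴/2 ≥ 2`.
-/

open Real Filter Topology

theorem iteratedDeriv_two_eq_of_hasDerivAt {f f' : ℝ → ℝ} {f'' x : ℝ}
    (hf : ∀ᶠ y in 𝓝 x, HasDerivAt f (f' y) y) (hf' : HasDerivAt f' f'' x) :
    iteratedDeriv 2 f x = f'' := by
  rw [iteratedDeriv_succ, iteratedDeriv_one]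
  have hderiv : deriv f =ᶠ[𝓝 x] f' := hf.mono fun y hy => hy.deriv
  rw [hderiv.deriv_eq, hf'.deriv]

theorem iteratedDeriv_two_div_self {φ φ' : ℝ → ℝ} {φ'' x : ℝ} (hx : x ≠ 0)
    (hφ : ∀ᶠ t in 𝓝 x, HasDerivAt φ (φ' t) t) (hφ' : HasDerivAt φ' φ'' x) :
    iteratedDeriv 2 (fun t => φ t / t) x =
      (x ^ 2 * φ'' - 2 * x * φ' x + 2 * φ x) / x ^ 3 := by
  have hfirst : ∀ᶠ t in 𝓝 x, HasDerivAt (fun t => φ t / t) ((φ' t * t - φ t) / t ^ 2) t := by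
    filter_upwards [hφ, eventually_ne_nhds hx] with t ht ht0
    simpa using ht.fun_div (hasDerivAt_id' t) ht0
  have hsecond : HasDerivAt (fun t => (φ' t * t - φ t) / t ^ 2)
      (((φ'' * x + φ' x - φ' x) * x ^ 2 - (φ' x * x - φ x) * (2 * x)) / (x ^ 2) ^ 2) x := by
    simpa using ((hφ'.fun_mul (hasDerivAt_id' x)).fun_sub hφ.self_of_nhds).fun_div
      (hasDerivAt_pow 2 x) (pow_ne_zero 2 hx)
  rw [iteratedDeriv_two_eq_of_hasDerivAt hfirst hsecond]
  field_simp
  ring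

theorem two_le_exp_mul_sq_sub_one_add_one {x : ℝ} (hx : 0 ≤ x) :
    2 ≤ exp x * ((x - 1) ^ 2 + 1) :=
  calc 2 ≤ 2 + x ^ 4 / 2 := le_add_of_nonneg_right (by positivity)
    _ = (1 + x + x ^ 2 / 2) * ((x - 1) ^ 2 + 1) := by ring
    _ ≤ exp x * ((x - 1) ^ 2 + 1) := by gcongr; exact quadratic_le_exp_of_nonneg hx

theorem two_le_rpow_mul_sq_sub_one_add_one {a τ : ℝ} (ha : 1 ≤ a) (hτ : 0 ≤ τ) :
    2 ≤ a ^ τ * ((τ * log a - 1) ^ 2 + 1) := by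
  rw [rpow_def_of_pos (by linarith), mul_comm (log a)]
  exact two_le_exp_mul_sq_sub_one_add_one (mul_nonneg hτ (log_nonneg ha))

theorem iteratedDeriv_two_rpow_sub_linear_div_self {a c d e τ : ℝ} (ha : 0 < a) (hτ : τ ≠ 0) :
    iteratedDeriv 2 (fun t => (c * (a ^ t - 1) - d * t + e) / t) τ =
      c / τ ^ 3 * (a ^ τ * ((τ * log a - 1) ^ 2 + 1) - 2) + 2 * e / τ ^ 3 := by
  have hpow (t : ℝ) : HasDerivAt (a ^ ·) (a ^ t * log a) t :=
    (hasStrictDerivAt_const_rpow ha t).hasDerivAt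
  have hφ (t : ℝ) : HasDerivAt (fun t => c * (a ^ t - 1) - d * t + e)
      (c * (a ^ t * log a) - d) t := by
    simpa using (((hpow t).sub_const 1).const_mul c).sub ((hasDerivAt_id t).const_mul d)
      |>.add_const e
  have hφ' : HasDerivAt (fun t => c * (a ^ t * log a) - d) (c * (a ^ τ * log a * log a)) τ :=
    (((hpow τ).mul_const (log a)).const_mul c).sub_const d
  rw [iteratedDeriv_two_div_self hτ (Eventually.of_forall hφ) hφ']
  field_simp
  ring

/-- For δ, η, β > 0 and ∇ ≥ 0, the second derivative of `H(τ) = (φ(τ) + ∇)/τ` at any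
`τ > 0` equals `(δ/(β·τ³))·((ηβ+1)^τ·((τ·ln(ηβ+1) − 1)² + 1) − 2) + 2∇/τ³`, and this
second derivative is nonnegative for every `τ ≥ 1`. -/
theorem H_second_deriv (δ η β nabla : ℝ)
    (hδ : 0 < δ) (hη : 0 < η) (hβ : 0 < β) (hnabla : 0 ≤ nabla) :
    (∀ τ : ℝ, 0 < τ →
      iteratedDeriv 2
        (fun τ : ℝ => (((δ / β) * ((η * β + 1) ^ τ - 1) - η * δ * τ) + nabla) / τ) τ =
      (δ / (β * τ ^ 3)) *
        ((η * β + 1) ^ τ * ((τ * Real.log (η * β + 1) - 1) ^ 2 + 1) - 2) +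
        2 * nabla / τ ^ 3) ∧
    (∀ τ : ℝ, 1 ≤ τ →
      0 ≤ iteratedDeriv 2
        (fun τ : ℝ => (((δ / β) * ((η * β + 1) ^ τ - 1) - η * δ * τ) + nabla) / τ) τ) := by
  have ha : 1 ≤ η * β + 1 := le_add_of_nonneg_left (by positivity)
  have hformula (τ : ℝ) (hτ : 0 < τ) := by
    have h := iteratedDeriv_two_rpow_sub_linear_div_self (c := δ / β) (d := η * δ) (e := nabla)
      (by linarith : 0 < η * β + 1) hτ.ne'
    rwa [div_div] at h
  refine ⟨hformula, fun τ hτ => ?_⟩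
  have hτ0 : 0 < τ := by linarith
  rw [hformula τ hτ0]
  have hbracket := two_le_rpow_mul_sq_sub_one_add_one ha hτ0.le
  exact add_nonneg (mul_nonneg (by positivity) (sub_nonneg.2 hbracket)) (by positivity)
end
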